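/- Let p be a prime with 4 dividing p−1, let λ be an element of order 4 in (ℤ/pℤ)ˣ, and let k ∈ ℤ/pℤ. Then the assignment a ↦ b, b ↦ a^λ b^{λ−1} c^k, c ↦ c^{−λ} extends to an automorphism α of G_2(p) of order 4, and α permutes the four elements of R_{4,k} cyclically: α(a) = b, α(b) = a^λ b^{λ−1} c^k, α(a^λ b^{λ−1} c^k) = a^{−λ−1} b^{−λ} c^{1−k}, and α(a^{−λ−1} b^{−λ} c^{1−k}) = a. -/

import Mathlib

/-- The Cayley graph of a group `G` with respect to a subset `S`:
vertices are the elements of `G`, and `x`, `y` are adjacent iff `y * x⁻¹ ∈ S`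
(symmetrized; when `S = S⁻¹` and `1 ∉ S` this is the usual Cayley graph). -/
def Cay (G : Type*) [Group G] (S : Set G) : SimpleGraph G where
  Adj x y := x ≠ y ∧ (y * x⁻¹ ∈ S ∨ x * y⁻¹ ∈ S)
  symm := ⟨fun x y h => ⟨h.1.symm, h.2.symm⟩⟩
  loopless := ⟨fun x h => h.1 rfl⟩

namespace SimpleGraph
variable {V : Type*} (Γ : SimpleGraph V)

/-- The automorphism group acts transitively on vertices. -/
def VertexTransitive : Prop := ∀ u v : V, ∃ f : Γ ≃g Γ, f u = v

/-- The automorphism group acts transitively on (undirected) edges. -/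
def EdgeTransitive : Prop :=
  ∀ e₁ ∈ Γ.edgeSet, ∀ e₂ ∈ Γ.edgeSet, ∃ f : Γ ≃g Γ, Sym2.map f e₁ = e₂

/-- The automorphism group acts transitively on arcs (ordered pairs of adjacent vertices). -/
def ArcTransitive : Prop :=
  ∀ u v x y : V, Γ.Adj u v → Γ.Adj x y → ∃ f : Γ ≃g Γ, f u = x ∧ f v = y

/-- A graph is half-arc-transitive if it is vertex- and edge- but not arc-transitive. -/
def HalfArcTransitive : Prop :=
  Γ.VertexTransitive ∧ Γ.EdgeTransitive ∧ ¬ Γ.ArcTransitive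

end SimpleGraph

/-- The right regular representation `Ĝ = {x ↦ x * g | g ∈ G}` as a subgroup of the
automorphism group of the Cayley graph `Cay G S`. -/
def rightRegular (G : Type*) [Group G] (S : Set G) :
    Subgroup ((Cay G S) ≃g (Cay G S)) where
  carrier := {f | ∃ g : G, ∀ x, f x = x * g}
  one_mem' := ⟨1, fun x => (mul_one x).symm⟩
  mul_mem' := by
    rintro f f' ⟨g, hg⟩ ⟨g', hg'⟩
    exact ⟨g' * g, fun x => by
      show f (f' x) = x * (g' * g)
      rw [hg', hg, mul_assoc]⟩
  inv_mem' := by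
    rintro f ⟨g, hg⟩
    refine ⟨g⁻¹, fun x => ?_⟩
    show f.symm x = x * g⁻¹
    have h1 : f (x * g⁻¹) = x := by rw [hg, inv_mul_cancel_right]
    have h2 : f.symm (f (x * g⁻¹)) = x * g⁻¹ := RelIso.symm_apply_apply f _
    rw [h1] at h2
    exact h2

/-- A Cayley graph is *normal* if the right regular representation is a normal subgroup
of its full automorphism group. -/
def CayleyNormal (G : Type*) [Group G] (S : Set G) : Prop :=
  (rightRegular G S).Normal

/-- `Aut(G, S)`: the group of automorphisms of `G` preserving the subset `S` setwise. -/
def autStab (G : Type*) [Group G] (S : Set G) : Subgroup (MulAut G) where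
  carrier := {α | α '' S = S}
  one_mem' := by simp
  mul_mem' := by
    intro α β hα hβ
    show (α * β) '' S = S
    have : ⇑(α * β) = ⇑α ∘ ⇑β := rfl
    rw [this, Set.image_comp, hβ, hα]
  inv_mem' := by
    intro α hα
    show ⇑α⁻¹ '' S = S
    conv_lhs => rw [← hα]
    rw [← Set.image_comp]
    have : ⇑α⁻¹ ∘ ⇑α = id := by
      funext x
      exact α.symm_apply_apply x
    rw [this, Set.image_id]

/-- The setoid on an index set identifying indices with isomorphic graphs. -/
def graphIsoSetoid {ι V : Type*} (F : ι → SimpleGraph V) : Setoid ι where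
  r k l := Nonempty (F k ≃g F l)
  iseqv := ⟨fun _ => ⟨RelIso.refl _⟩, fun ⟨f⟩ => ⟨f.symm⟩, fun ⟨f⟩ ⟨g⟩ => ⟨f.trans g⟩⟩
/-- Relations for the group `G₁(p) = ⟨a, b | a^(p²) = 1, b^p = 1, b⁻¹ a b = a^(1+p)⟩`. -/
def G1Rels (p : ℕ) : Set (FreeGroup (Fin 2)) :=
  {FreeGroup.of 0 ^ (p ^ 2), FreeGroup.of 1 ^ p,
    (FreeGroup.of 1)⁻¹ * FreeGroup.of 0 * FreeGroup.of 1 * (FreeGroup.of 0 ^ (1 + p))⁻¹}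

/-- The nonabelian metacyclic group of order `p³`. -/
abbrev G1 (p : ℕ) : Type := PresentedGroup (G1Rels p)

/-- The generator `a` of `G₁(p)`. -/
def a1 (p : ℕ) : G1 p := PresentedGroup.of 0

/-- The generator `b` of `G₁(p)`. -/
def b1 (p : ℕ) : G1 p := PresentedGroup.of 1

/-- The connection set `T^{j,k} = {b^k a^(e^i), (b^k a^(e^i))⁻¹ : 0 ≤ i ≤ j-1} ⊆ G₁(p)`,
where `e` is a unit of `ℤ/p²ℤ` (of order `j`). -/
def Tset (p : ℕ) (e : (ZMod (p ^ 2))ˣ) (j k : ℕ) : Set (G1 p) :=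
  ((fun i : ℕ => b1 p ^ k * a1 p ^ ((e ^ i : (ZMod (p ^ 2))ˣ) : ZMod (p ^ 2)).val) ''
      Set.Iio j) ∪
  ((fun i : ℕ => b1 p ^ k * a1 p ^ ((e ^ i : (ZMod (p ^ 2))ˣ) : ZMod (p ^ 2)).val) ''
      Set.Iio j)⁻¹

open scoped commutatorElement

/-- Relations for the Heisenberg group
`G₂(p) = ⟨a, b, c | a^p = b^p = c^p = 1, [a,b] = c, [a,c] = [b,c] = 1⟩`. -/
def G2Rels (p : ℕ) : Set (FreeGroup (Fin 3)) :=
  {FreeGroup.of 0 ^ p, FreeGroup.of 1 ^ p, FreeGroup.of 2 ^ p,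
    ⁅FreeGroup.of (0 : Fin 3), FreeGroup.of 1⁆ * (FreeGroup.of 2)⁻¹,
    ⁅FreeGroup.of (0 : Fin 3), FreeGroup.of 2⁆, ⁅FreeGroup.of (1 : Fin 3), FreeGroup.of 2⁆}

/-- The nonabelian group of order `p³` and exponent `p`. -/
abbrev G2 (p : ℕ) : Type := PresentedGroup (G2Rels p)

/-- The generator `a` of `G₂(p)`. -/
def a2 (p : ℕ) : G2 p := PresentedGroup.of 0

/-- The generator `b` of `G₂(p)`. -/
def b2 (p : ℕ) : G2 p := PresentedGroup.of 1

/-- The generator `c = [a,b]` of `G₂(p)`. -/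
def c2 (p : ℕ) : G2 p := PresentedGroup.of 2

/-- Power of an element of `G₂(p)` by an exponent in `ℤ/pℤ` (well defined as every
element of `G₂(p)` has order dividing `p`). -/
def pw {p : ℕ} (x : G2 p) (n : ZMod p) : G2 p := x ^ n.val

/-- `R_{4,k} = {a, b, a^λ b^(λ-1) c^k, a^(-λ-1) b^(-λ) c^(1-k)} ⊆ G₂(p)`. -/
def R4 (p : ℕ) (lam k : ZMod p) : Set (G2 p) :=
  {a2 p, b2 p,
    pw (a2 p) lam * pw (b2 p) (lam - 1) * pw (c2 p) k,
    pw (a2 p) (-lam - 1) * pw (b2 p) (-lam) * pw (c2 p) (1 - k)}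

/-- `S_{4,k} = R_{4,k} ∪ R_{4,k}⁻¹ ⊆ G₂(p)`. -/
def S4 (p : ℕ) (lam k : ZMod p) : Set (G2 p) :=
  R4 p lam k ∪ (R4 p lam k)⁻¹


/-!
Write the elements of `G₂(p)` as `a^i b^j c^l` with `i j l : ℤ/p`. Because `c = [a, b]` commutes
with `a` and `b`, these words multiply by the Heisenberg law
`(i, j, l) (i', j', l') = (i + i', j + j', l + l' - j i')`, and for odd `p` their `p`-th powers are
trivial, since the correction term `C(p, 2) j i` vanishes mod `p`. In particular
`b` and `x = a^λ b^{λ-1} c^k` are of order dividing `p` and have commutator `c^{-λ}`, so the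
presentation of `G₂(p)` gives an endomorphism `α` with `a ↦ b`, `b ↦ x`, `c ↦ c^{-λ}`.
Evaluating `α` on words reduces the remaining claims to identities in `ℤ/p` that follow from
`λ² = -1`: `α` cycles `a ↦ b ↦ x ↦ a^{-λ-1} b^{-λ} c^{1-k} ↦ a`, and `α⁴ c = c^{λ⁴} = c`.
So `α⁴ = 1`, while `α² ≠ 1` since `α² a = x` has `a`-exponent `λ ≠ 1`.
-/

section CentralCommutator

variable {G : Type*} [Group G] {a b c : G}

theorem zpow_mul_zpow_eq_of_commutatorElement_eq (hab : ⁅a, b⁆ = c) (hca : Commute c a)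
    (hcb : Commute c b) (i j : ℤ) : b ^ j * a ^ i = c ^ (-(i * j)) * a ^ i * b ^ j := by
  have ha : SemiconjBy a (b ^ j) (c ^ j * b ^ j) := by
    have : SemiconjBy a b (c * b) := by rw [SemiconjBy, ← hab]; group
    simpa only [hcb.mul_zpow] using this.zpow_right j
  have hb : SemiconjBy (b ^ j) a (c ^ (-j) * a) :=
    calc b ^ j * a = c ^ (-j) * (c ^ j * b ^ j * a) := by group
      _ = c ^ (-j) * a * b ^ j := by rw [← ha.eq]; group
  have := hb.zpow_right i
  rwa [(hca.zpow_left _).mul_zpow i, ← zpow_mul, neg_mul, mul_comm j] at this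

theorem heisenberg_mul (hab : ⁅a, b⁆ = c) (hca : Commute c a) (hcb : Commute c b)
    (i j l i' j' l' : ℤ) :
    a ^ i * b ^ j * c ^ l * (a ^ i' * b ^ j' * c ^ l') =
      a ^ (i + i') * b ^ (j + j') * c ^ (l + l' - j * i') := by
  have hc : ∀ n i j : ℤ, Commute (c ^ n) (a ^ i * b ^ j) := fun n i j =>
    (hca.zpow_zpow n i).mul_right (hcb.zpow_zpow n j)
  calc a ^ i * b ^ j * c ^ l * (a ^ i' * b ^ j' * c ^ l')
      = a ^ i * (b ^ j * a ^ i') * b ^ j' * (c ^ l * c ^ l') := by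
        rw [mul_assoc _ (c ^ l), ← mul_assoc (c ^ l), (hc l i' j').eq]; group
    _ = a ^ i * a ^ i' * (c ^ (-(i' * j)) * (b ^ j * b ^ j')) * (c ^ l * c ^ l') := by
        rw [zpow_mul_zpow_eq_of_commutatorElement_eq hab hca hcb, (hca.zpow_zpow _ i').eq]
        group
    _ = _ := by
        rw [← zpow_add b, (hcb.zpow_zpow _ _).eq]; group

theorem heisenberg_pow (hab : ⁅a, b⁆ = c) (hca : Commute c a) (hcb : Commute c b)
    (i j l : ℤ) (n : ℕ) :
    (a ^ i * b ^ j * c ^ l) ^ n =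
      a ^ (n * i) * b ^ (n * j) * c ^ (n * l - n.choose 2 * (j * i)) := by
  induction n with
  | zero => simp
  | succ n ih =>
    rw [pow_succ, ih, heisenberg_mul hab hca hcb, Nat.choose_succ_succ', Nat.choose_one_right]
    push_cast
    ring_nf

end CentralCommutator

theorem pow_val_intCast {G : Type*} [Group G] {p : ℕ} [NeZero p] {x : G} (hx : x ^ p = 1)
    (n : ℤ) : x ^ (n : ZMod p).val = x ^ n := by
  rw [← zpow_natCast, zpow_eq_zpow_iff_modEq, ZMod.val_intCast]
  exact (Int.mod_modEq n p).of_dvd (Int.natCast_dvd_natCast.mpr (orderOf_dvd_of_pow_eq_one hx))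

theorem Monoid.End.exists_mulAut_of_isOfFinOrder {M : Type*} [Monoid M] {f : Monoid.End M}
    (hf : IsOfFinOrder f) : ∃ α : MulAut M, ⇑α = ⇑f ∧ orderOf α = orderOf f := by
  have hn : orderOf f ≠ 0 := hf.orderOf_pos.ne'
  let α : MulAut M := MonoidHom.toMulEquiv f (f ^ (orderOf f - 1))
    ((pow_sub_one_mul hn f).trans (pow_orderOf_eq_one f))
    ((mul_pow_sub_one hn f).trans (pow_orderOf_eq_one f))
  have hinj : Function.Injective (MulDistribMulAction.toMonoidEnd (MulAut M) M) :=
    fun β γ h => MulEquiv.ext fun x => DFunLike.congr_fun h x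
  exact ⟨α, rfl, (orderOf_injective _ hinj α).symm⟩

theorem Units.sq_eq_neg_one_of_orderOf_eq_four {R : Type*} [CommRing R] [NoZeroDivisors R]
    {u : Rˣ} (hu : orderOf u = 4) : (u : R) ^ 2 = -1 :=
  ((IsPrimitiveRoot.coe_units_iff.mpr (IsPrimitiveRoot.iff_orderOf.mpr hu)).pow_of_dvd
    two_ne_zero (by norm_num)).eq_neg_one_of_two_right

namespace G2

variable {p : ℕ}

theorem a2_pow_p : a2 p ^ p = 1 := PresentedGroup.one_of_mem (by simp [G2Rels])

theorem b2_pow_p : b2 p ^ p = 1 := PresentedGroup.one_of_mem (by simp [G2Rels])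

theorem c2_pow_p : c2 p ^ p = 1 := PresentedGroup.one_of_mem (by simp [G2Rels])

theorem commutatorElement_a2_b2 : ⁅a2 p, b2 p⁆ = c2 p :=
  mul_inv_eq_one.mp <| PresentedGroup.one_of_mem (rels := G2Rels p)
    (x := ⁅FreeGroup.of (0 : Fin 3), .of 1⁆ * (.of 2)⁻¹) (by simp [G2Rels])

theorem commute_c2_a2 : Commute (c2 p) (a2 p) :=
  (commutatorElement_eq_one_iff_commute.mp <| PresentedGroup.one_of_mem (rels := G2Rels p)
    (x := ⁅FreeGroup.of (0 : Fin 3), .of 2⁆) (by simp [G2Rels])).symm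

theorem commute_c2_b2 : Commute (c2 p) (b2 p) :=
  (commutatorElement_eq_one_iff_commute.mp <| PresentedGroup.one_of_mem (rels := G2Rels p)
    (x := ⁅FreeGroup.of (1 : Fin 3), .of 2⁆) (by simp [G2Rels])).symm

section Lift

variable {H : Type*} [Group H] {x y z : H} (hx : x ^ p = 1) (hy : y ^ p = 1) (hz : z ^ p = 1)
  (hxy : ⁅x, y⁆ = z) (hxz : ⁅x, z⁆ = 1) (hyz : ⁅y, z⁆ = 1)

def lift : G2 p →* H :=
  PresentedGroup.toGroup (f := ![x, y, z]) <| by simp [G2Rels, hx, hy, hz, hxy, hxz, hyz]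

@[simp] theorem lift_a2 : lift hx hy hz hxy hxz hyz (a2 p) = x := PresentedGroup.toGroup.of _

@[simp] theorem lift_b2 : lift hx hy hz hxy hxz hyz (b2 p) = y := PresentedGroup.toGroup.of _

@[simp] theorem lift_c2 : lift hx hy hz hxy hxz hyz (c2 p) = z := PresentedGroup.toGroup.of _

end Lift

theorem hom_ext {H : Type*} [Group H] {f g : G2 p →* H} (ha : f (a2 p) = g (a2 p))
    (hb : f (b2 p) = g (b2 p)) (hc : f (c2 p) = g (c2 p)) : f = g :=
  PresentedGroup.ext fun i => by fin_cases i <;> assumption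

def nf (i j l : ZMod p) : G2 p := pw (a2 p) i * pw (b2 p) j * pw (c2 p) l

theorem nf_zero_zero (m : ZMod p) : nf 0 0 m = pw (c2 p) m := by simp [nf, pw]

section NeZero

variable [NeZero p]

theorem pw_intCast {x : G2 p} (hx : x ^ p = 1) (n : ℤ) : pw x n = x ^ n :=
  pow_val_intCast hx n

theorem nf_intCast (i j l : ℤ) : nf (i : ZMod p) j l = a2 p ^ i * b2 p ^ j * c2 p ^ l := by
  rw [nf, pw_intCast a2_pow_p, pw_intCast b2_pow_p, pw_intCast c2_pow_p]

@[simp] theorem nf_one_zero_zero : nf 1 0 0 = a2 p := by simpa using nf_intCast (p := p) 1 0 0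

@[simp] theorem nf_zero_one_zero : nf 0 1 0 = b2 p := by simpa using nf_intCast (p := p) 0 1 0

@[simp] theorem nf_zero_zero_one : nf 0 0 1 = c2 p := by simpa using nf_intCast (p := p) 0 0 1

@[simp] theorem nf_zero_zero_zero : nf 0 0 0 = (1 : G2 p) := by
  simpa using nf_intCast (p := p) 0 0 0

theorem nf_mul (i j l i' j' l' : ZMod p) :
    nf i j l * nf i' j' l' = nf (i + i') (j + j') (l + l' - j * i') := by
  obtain ⟨i, rfl⟩ := ZMod.intCast_surjective i
  obtain ⟨j, rfl⟩ := ZMod.intCast_surjective j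
  obtain ⟨l, rfl⟩ := ZMod.intCast_surjective l
  obtain ⟨i', rfl⟩ := ZMod.intCast_surjective i'
  obtain ⟨j', rfl⟩ := ZMod.intCast_surjective j'
  obtain ⟨l', rfl⟩ := ZMod.intCast_surjective l'
  simp only [nf_intCast, ← Int.cast_add, ← Int.cast_mul, ← Int.cast_sub,
    heisenberg_mul commutatorElement_a2_b2 commute_c2_a2 commute_c2_b2]

theorem nf_pow (i j l : ZMod p) (n : ℕ) :
    nf i j l ^ n = nf ((n : ZMod p) * i) (n * j) (n * l - (n.choose 2 : ℕ) * (j * i)) := by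
  obtain ⟨i, rfl⟩ := ZMod.intCast_surjective i
  obtain ⟨j, rfl⟩ := ZMod.intCast_surjective j
  obtain ⟨l, rfl⟩ := ZMod.intCast_surjective l
  rw [nf_intCast, heisenberg_pow commutatorElement_a2_b2 commute_c2_a2 commute_c2_b2,
    ← nf_intCast]
  push_cast
  rfl

theorem nf_inv (i j l : ZMod p) : (nf i j l)⁻¹ = nf (-i) (-j) (-l - j * i) :=
  inv_eq_of_mul_eq_one_right <| by rw [nf_mul]; ring_nf; exact nf_zero_zero_zero

theorem commutatorElement_nf (i j l i' j' l' : ZMod p) :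
    ⁅nf i j l, nf i' j' l'⁆ = nf 0 0 (i * j' - j * i') := by
  rw [commutatorElement_def, nf_inv, nf_inv, nf_mul, nf_mul, nf_mul]
  ring_nf

theorem fst_eq_of_nf_eq_nf {i j l i' j' l' : ZMod p} (h : nf i j l = nf i' j' l') : i = i' := by
  let θ : G2 p →* Multiplicative (ZMod p) :=
    lift (x := .ofAdd 1) (y := 1) (z := 1) (by simp [← ofAdd_nsmul]) (one_pow p) (one_pow p)
      (commutatorElement_one_right _) (commutatorElement_one_right _)
      (commutatorElement_one_right _)
  have hθ (i j l : ZMod p) : θ (nf i j l) = .ofAdd i := by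
    simp [θ, nf, pw, ← ofAdd_nsmul]
  simpa [hθ] using congrArg θ h

end NeZero

section OddPrime

variable [Fact p.Prime] [NeZero (2 : ZMod p)]

theorem nf_pow_p (i j l : ZMod p) : nf i j l ^ p = 1 := by
  simp [nf_pow, Nat.cast_choose_two]

theorem pw_nf (i j l m : ZMod p) :
    pw (nf i j l) m = nf (m * i) (m * j) (m * l - m * (m - 1) / 2 * (j * i)) := by
  rw [pw, nf_pow, Nat.cast_choose_two, ZMod.natCast_zmod_val]

def alpha (L k : ZMod p) : Monoid.End (G2 p) :=
  lift (x := nf 0 1 0) (y := nf L (L - 1) k) (z := nf 0 0 (-L))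
    (nf_pow_p _ _ _) (nf_pow_p _ _ _) (nf_pow_p _ _ _)
    (by rw [commutatorElement_nf]; ring_nf)
    (by rw [commutatorElement_nf]; simp)
    (by rw [commutatorElement_nf]; simp)

variable (L k : ZMod p)

theorem alpha_a2 : alpha L k (a2 p) = b2 p :=
  (lift_a2 ..).trans nf_zero_one_zero

theorem alpha_b2 : alpha L k (b2 p) = nf L (L - 1) k :=
  lift_b2 ..

theorem alpha_c2 : alpha L k (c2 p) = nf 0 0 (-L) :=
  lift_c2 ..

theorem alpha_nf (i j l : ZMod p) :
    alpha L k (nf i j l) = nf (L * j) (i + (L - 1) * j)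
      (k * j - L * (L - 1) * (j * (j - 1) / 2) - L * i * j - L * l) := by
  have map_pw (x : G2 p) (m : ZMod p) : alpha L k (pw x m) = pw (alpha L k x) m :=
    map_pow _ _ _
  rw [nf, map_mul, map_mul, map_pw, map_pw, map_pw, alpha_a2, alpha_b2, alpha_c2,
    ← nf_zero_one_zero, pw_nf, pw_nf, pw_nf, nf_mul, nf_mul]
  congr 1 <;> ring

theorem alpha_nf_zero_zero (l : ZMod p) : alpha L k (nf 0 0 l) = nf 0 0 (-L * l) := by
  rw [alpha_nf]
  congr 1 <;> ring

variable {L}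

theorem alpha_nf_L_sub_one (hL : L ^ 2 = -1) :
    alpha L k (nf L (L - 1) k) = nf (-L - 1) (-L) (1 - k) := by
  rw [alpha_nf]
  congr 1
  · linear_combination hL
  · linear_combination hL
  · field_simp
    linear_combination (-L ^ 2 + 2 * L - 2) * hL

theorem alpha_nf_neg_L_sub_one (hL : L ^ 2 = -1) :
    alpha L k (nf (-L - 1) (-L) (1 - k)) = a2 p := by
  rw [alpha_nf, ← nf_one_zero_zero]
  congr 1
  · linear_combination -hL
  · linear_combination -hL
  · field_simp
    linear_combination (-L ^ 2 - 2 * L) * hL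

theorem alpha_pow_four (hL : L ^ 2 = -1) : alpha L k ^ 4 = 1 := by
  refine hom_ext ?_ ?_ ?_
  · show alpha L k (alpha L k (alpha L k (alpha L k (a2 p)))) = a2 p
    rw [alpha_a2, alpha_b2, alpha_nf_L_sub_one k hL, alpha_nf_neg_L_sub_one k hL]
  · show alpha L k (alpha L k (alpha L k (alpha L k (b2 p)))) = b2 p
    rw [alpha_b2, alpha_nf_L_sub_one k hL, alpha_nf_neg_L_sub_one k hL, alpha_a2]
  · show alpha L k (alpha L k (alpha L k (alpha L k (c2 p)))) = c2 p
    rw [← nf_zero_zero_one, alpha_nf_zero_zero, alpha_nf_zero_zero, alpha_nf_zero_zero,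
      alpha_nf_zero_zero]
    congr 1
    linear_combination (L ^ 2 - 1) * hL

theorem alpha_sq_ne_one (hL : L ^ 2 = -1) : alpha L k ^ 2 ≠ 1 := by
  intro h
  have h' : nf L (L - 1) k = nf 1 0 0 := by
    rw [← alpha_b2, ← alpha_a2 L k, nf_one_zero_zero]
    exact DFunLike.congr_fun h (a2 p)
  have hL1 : L = 1 := fst_eq_of_nf_eq_nf h'
  apply two_ne_zero (α := ZMod p)
  linear_combination hL - (L + 1) * hL1

theorem orderOf_alpha (hL : L ^ 2 = -1) : orderOf (alpha L k) = 4 :=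
  orderOf_eq_prime_pow (p := 2) (n := 1) (alpha_sq_ne_one k hL) (alpha_pow_four k hL)

end OddPrime

end G2

/-- The assignment `a ↦ b`, `b ↦ a^λ b^(λ-1) c^k`, `c ↦ c^(-λ)` extends
to an automorphism `α` of `G₂(p)` of order 4 permuting the four elements of `R_{4,k}`
cyclically. -/
theorem statement9 (p : ℕ) (hp : p.Prime) (hdvd : 4 ∣ p - 1)
    (lam : (ZMod p)ˣ) (hlam : orderOf lam = 4) (k : ZMod p) :
    ∃ α : MulAut (G2 p),
      orderOf α = 4 ∧
      α (a2 p) = b2 p ∧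
      α (b2 p) = pw (a2 p) (lam : ZMod p) * pw (b2 p) ((lam : ZMod p) - 1) * pw (c2 p) k ∧
      α (c2 p) = pw (c2 p) (-(lam : ZMod p)) ∧
      α (pw (a2 p) (lam : ZMod p) * pw (b2 p) ((lam : ZMod p) - 1) * pw (c2 p) k) =
        pw (a2 p) (-(lam : ZMod p) - 1) * pw (b2 p) (-(lam : ZMod p)) * pw (c2 p) (1 - k) ∧
      α (pw (a2 p) (-(lam : ZMod p) - 1) * pw (b2 p) (-(lam : ZMod p)) * pw (c2 p) (1 - k)) =
        a2 p := by
  have : Fact p.Prime := ⟨hp⟩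
  have : NeZero (2 : ZMod p) := ⟨fun h => by
    have := Nat.le_of_dvd two_pos ((ZMod.natCast_eq_zero_iff 2 p).mp (by exact_mod_cast h))
    have := hp.two_le
    omega⟩
  have hL := Units.sq_eq_neg_one_of_orderOf_eq_four hlam
  obtain ⟨α, hα, hα_order⟩ := Monoid.End.exists_mulAut_of_isOfFinOrder
    (isOfFinOrder_iff_pow_eq_one.mpr ⟨4, four_pos, G2.alpha_pow_four k hL⟩)
  refine ⟨α, hα_order.trans (G2.orderOf_alpha k hL), ?_, ?_, ?_, ?_, ?_⟩ <;> rw [hα]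
  · exact G2.alpha_a2 _ k
  · exact G2.alpha_b2 _ k
  · exact (G2.alpha_c2 _ k).trans (G2.nf_zero_zero _)
  · exact G2.alpha_nf_L_sub_one k hL
  · exact G2.alpha_nf_neg_L_sub_one k hL
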